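/- arXiv:2003.06314 — 3 statements merged into one kernel-verified Lean document; each statement's English description precedes it below -/
import Mathlib

section
/- Let ω be an ultrafilter on ℕ, (A_i) a sequence of unital C*-algebras, and a = (a_i) an element of the ultraproduct ∏_{i→ω} A_i. If a is invertible in the ultraproduct, then the set {i ∈ ℕ : a_i is invertible in A_i} belongs to ω. -/
/-! By the Neumann series, every element within distance `1` of `1` in a Banach algebra is
invertible. Hence for `ω`-almost every `i` both `a i * d i` and `d i * a i` are invertible, which
gives `a i` a right and a left inverse. -/

theorem isUnit_of_isUnit_mul_of_isUnit_mul_swap {M : Type*} [Monoid M] {a b : M}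
    (hab : IsUnit (a * b)) (hba : IsUnit (b * a)) : IsUnit a := by
  obtain ⟨u, hu⟩ := hab
  obtain ⟨v, hv⟩ := hba
  have hright : a * (b * ↑u⁻¹) = 1 := by rw [← mul_assoc, ← hu, u.mul_inv]
  have hleft : (↑v⁻¹ * b) * a = 1 := by rw [mul_assoc, ← hv, v.inv_mul]
  refine isUnit_iff_exists.mpr ⟨b * ↑u⁻¹, hright, ?_⟩
  rwa [left_inv_eq_right_inv hleft hright] at hleft

theorem isUnit_of_norm_sub_one_lt_one {R : Type*} [NormedRing R] [HasSummableGeomSeries R] {x : R}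
    (hx : ‖x - 1‖ < 1) : IsUnit x := by
  simpa using isUnit_one_sub_of_norm_lt_one (x := 1 - x) (by rwa [norm_sub_rev])

open Filter in
theorem ultraproduct_invertible_index_set_general (A : ℕ → Type*) [∀ i, CStarAlgebra (A i)]
    (ω : Ultrafilter ℕ) (a : ∀ i, A i)
    (hinv : ∃ d : ∀ i, A i, (∃ C : ℝ, ∀ i, ‖d i‖ ≤ C) ∧
      Tendsto (fun i => ‖a i * d i - 1‖) (ω : Filter ℕ) (nhds 0) ∧
      Tendsto (fun i => ‖d i * a i - 1‖) (ω : Filter ℕ) (nhds 0)) :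
    {i : ℕ | IsUnit (a i)} ∈ ω := by
  obtain ⟨d, -, had, hda⟩ := hinv
  filter_upwards [had.eventually (gt_mem_nhds one_pos), hda.eventually (gt_mem_nhds one_pos)]
    with i had_lt hda_lt
  exact isUnit_of_isUnit_mul_of_isUnit_mul_swap (isUnit_of_norm_sub_one_lt_one had_lt)
    (isUnit_of_norm_sub_one_lt_one hda_lt)

open Filter in
/-- If a bounded sequence `a = (a i)` represents an invertible element of the
C*-ultraproduct `∏_{i→ω} A i` (i.e. there is a bounded sequence `d` with
`a i * d i → 1` and `d i * a i → 1` along `ω`), then `{i | a i is invertible} ∈ ω`. -/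
theorem ultraproduct_invertible_index_set (A : ℕ → Type*) [∀ i, CStarAlgebra (A i)]
    (ω : Ultrafilter ℕ) (a : ∀ i, A i) (ha : ∃ C : ℝ, ∀ i, ‖a i‖ ≤ C)
    (hinv : ∃ d : ∀ i, A i, (∃ C : ℝ, ∀ i, ‖d i‖ ≤ C) ∧
      Tendsto (fun i => ‖a i * d i - 1‖) (ω : Filter ℕ) (nhds 0) ∧
      Tendsto (fun i => ‖d i * a i - 1‖) (ω : Filter ℕ) (nhds 0)) :
    {i : ℕ | IsUnit (a i)} ∈ ω :=
  ultraproduct_invertible_index_set_general A ω a hinv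
end

section
/- Let D be a simple unital C*-algebra, B a C*-algebra, φ : D → B a c.p.c. order zero map with associated *-homomorphism Φ : C₀(0,1] ⊗ D → B, and π : B → C a surjective *-homomorphism. If π(φ(1)) has spectrum [0,1], then π ∘ Φ is injective. -/
structure IsCPCOrderZero {A B : Type*} [NonUnitalCStarAlgebra A] [NonUnitalCStarAlgebra B]
    [PartialOrder A] [StarOrderedRing A] [PartialOrder B] [StarOrderedRing B]
    (φ : A → B) : Prop where
  map_add : ∀ a b : A, φ (a + b) = φ a + φ b
  map_smul : ∀ (c : ℂ) (a : A), φ (c • a) = c • φ a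
  contractive : ∀ a : A, ‖φ a‖ ≤ ‖a‖
  completelyPositive : ∀ (n : ℕ) (N : Matrix (Fin n) (Fin n) A),
    ∃ P : Matrix (Fin n) (Fin n) B, (N.conjTranspose * N).map φ = P.conjTranspose * P
  orderZero : ∀ a b : A, 0 ≤ a → 0 ≤ b → a * b = 0 → φ a * φ b = 0
/-- The cone `C₀(0,1] ⊗ A`, realised concretely as the C*-algebra of continuous
functions `f : [0,1] → A` with `f 0 = 0`. -/
def cone (A : Type*) [NonUnitalCStarAlgebra A] :
    NonUnitalStarSubalgebra ℂ C(unitInterval, A) where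
  carrier := {f | f 0 = 0}
  add_mem' := by intro f g hf hg; simp_all [Set.mem_setOf_eq]
  zero_mem' := by simp
  mul_mem' := by intro f g hf hg; simp_all [Set.mem_setOf_eq]
  smul_mem' := by intro c f hf; simp_all [Set.mem_setOf_eq]
  star_mem' := by intro f hf; simp_all [Set.mem_setOf_eq]

/-- The elementary tensor `id_{(0,1]} ⊗ a`, i.e. the function `t ↦ t • a`,
as an element of the cone over `A`. -/
noncomputable def coneElem {A : Type*} [NonUnitalCStarAlgebra A] (a : A) : cone A :=
  ⟨⟨fun t => (t : ℝ) • a, by fun_prop⟩, by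
    show ((0 : unitInterval) : ℝ) • a = 0
    simp⟩


/-!
If `ψ = π ∘ Φ` kills some `f ≠ 0` of the cone, say `f t ≠ 0`, then the values at `t` of the
elements of `ker ψ` form a nonzero ideal of `D`. By simplicity its closure is `D`, so it contains
an element close to `1`, hence a unit, hence `1`: some `u ∈ ker ψ` has `u t = 1`. Then `u` is
invertible near `t`, and for a bump function `β` at `t` the product `(β ⊗ u⁻¹) u = β ⊗ 1` lies
in `ker ψ`. But on scalar functions `ψ` is a star homomorphism `C₀((0,1], ℝ) → C` sending `id`
to `π (φ 1)`, so by uniqueness of the continuous functional calculus it is the functional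
calculus of an element with spectrum `[0,1]`, which is injective.
-/

open scoped ContinuousMapZero CStarAlgebra

theorem ContinuousMapZero.injective_of_quasispectrum_id_eq {A : Type*} [NonUnitalCStarAlgebra A]
    {s : Set ℝ} [Fact (0 ∈ s)] (ρ : C(s, ℝ)₀ →⋆ₙₐ[ℝ] A) (hρ : Continuous ρ)
    (hs : quasispectrum ℝ (ρ (.id s)) = s) : Function.Injective ρ := by
  set a := ρ (.id s)
  have ha : IsSelfAdjoint a := IsSelfAdjoint.map (by ext; simp) ρ
  let e : C(s, quasispectrum ℝ a)₀ := ⟨(Homeomorph.setCongr hs.symm : C(s, quasispectrum ℝ a)), rfl⟩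
  let e' : C(quasispectrum ℝ a, s)₀ := ⟨(Homeomorph.setCongr hs : C(quasispectrum ℝ a, s)), rfl⟩
  have hcfc : cfcₙHom ha = ρ.comp (nonUnitalStarAlgHom_precomp ℝ e) :=
    cfcₙHom_eq_of_continuous_of_map_id ha _ (hρ.comp (continuous_precomp e)) rfl
  intro f g hfg
  have h : f.comp e' = g.comp e' := cfcₙHom_injective ha <| by rw [hcfc]; exact hfg
  ext x
  exact DFunLike.congr_fun h (e x)

theorem exists_tsupport_subset_apply_eq_one {X : Type*} [TopologicalSpace X] [CompactSpace X]
    [T2Space X] [Zero X] {U : Set X} (hU : IsOpen U) {x : X} (hx : x ∈ U) (h0 : 0 ∉ U) :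
    ∃ β : C(X, ℝ)₀, β x = 1 ∧ tsupport β ⊆ U := by
  obtain ⟨f, hfU, hf1, -⟩ := exists_tsupport_one_of_isOpen_isClosed hU
    isClosed_closure.isCompact isClosed_singleton (Set.singleton_subset_iff.2 hx)
  exact ⟨⟨f, image_eq_zero_of_notMem_tsupport fun h => h0 (hfU h)⟩, hf1 rfl, hfU⟩

namespace TwoSidedIdeal

variable {R : Type*}

def topologicalClosure [NonUnitalRing R] [TopologicalSpace R] [IsTopologicalRing R]
    (I : TwoSidedIdeal R) : TwoSidedIdeal R :=
  .mk' (closure I) (subset_closure I.zero_mem)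
    (fun hx hy => map_mem_closure₂ continuous_add hx hy fun _ ha _ hb => I.add_mem ha hb)
    (fun hx => map_mem_closure continuous_neg hx fun _ ha => I.neg_mem ha)
    (fun {x _} hy => map_mem_closure (continuous_const_mul x) hy fun _ hb => I.mul_mem_left x _ hb)
    (fun {_ y} hx => map_mem_closure (f := (· * y)) (continuous_mul_const y) hx
      fun _ ha => I.mul_mem_right _ y ha)

theorem coe_topologicalClosure [NonUnitalRing R] [TopologicalSpace R] [IsTopologicalRing R]
    (I : TwoSidedIdeal R) : (I.topologicalClosure : Set R) = closure I := by
  rw [topologicalClosure, coe_mk']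

theorem eq_top_of_dense [NormedRing R] [HasSummableGeomSeries R] {I : TwoSidedIdeal R}
    (hI : Dense (I : Set R)) : I = ⊤ := by
  obtain ⟨_, ⟨x, rfl⟩, hxI⟩ := hI.inter_open_nonempty _ Units.isOpen ⟨1, isUnit_one⟩
  rw [← one_mem_iff, ← x.inv_mul]
  exact I.mul_mem_left _ _ hxI

theorem eq_top_of_ne_bot [NormedRing R] [HasSummableGeomSeries R]
    (hsimple : ∀ K : TwoSidedIdeal R, IsClosed (K : Set R) → K = ⊥ ∨ K = ⊤)
    {I : TwoSidedIdeal R} (hI : I ≠ ⊥) : I = ⊤ := by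
  have hclosed : IsClosed (I.topologicalClosure : Set R) := by
    rw [coe_topologicalClosure]; exact isClosed_closure
  have hle : I ≤ I.topologicalClosure := fun x hx => by
    rw [← SetLike.mem_coe, coe_topologicalClosure]; exact subset_closure hx
  have hcl : I.topologicalClosure = ⊤ :=
    (hsimple _ hclosed).resolve_left fun h => hI (eq_bot_iff.2 (h ▸ hle))
  apply eq_top_of_dense
  rw [dense_iff_closure_eq, ← coe_topologicalClosure, hcl, coe_top]

end TwoSidedIdeal

instance unitInterval.fact_zero_mem : Fact ((0 : ℝ) ∈ unitInterval) := ⟨unitInterval.zero_mem⟩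

section Cone

variable {A : Type*} [NonUnitalCStarAlgebra A]

instance isClosed_cone : IsClosed (cone A : Set C(unitInterval, A)) :=
  isClosed_singleton.preimage (continuous_eval_const 0)

def coneFiber (J : TwoSidedIdeal (cone A)) {t : unitInterval} (ht : (t : ℝ) ≠ 0) :
    TwoSidedIdeal A :=
  .mk' ((fun x : cone A => (x : C(unitInterval, A)) t) '' J) ⟨0, J.zero_mem, rfl⟩
    (by rintro _ _ ⟨x, hx, rfl⟩ ⟨y, hy, rfl⟩; exact ⟨x + y, J.add_mem hx hy, rfl⟩)
    (by rintro _ ⟨x, hx, rfl⟩; exact ⟨-x, J.neg_mem hx, rfl⟩)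
    (by
      rintro a _ ⟨x, hx, rfl⟩
      refine ⟨coneElem ((t : ℝ)⁻¹ • a) * x, J.mul_mem_left _ _ hx, ?_⟩
      show ((t : ℝ) • (t : ℝ)⁻¹ • a) * _ = _
      rw [smul_inv_smul₀ ht])
    (by
      rintro _ a ⟨x, hx, rfl⟩
      refine ⟨x * coneElem ((t : ℝ)⁻¹ • a), J.mul_mem_right _ _ hx, ?_⟩
      show _ * ((t : ℝ) • (t : ℝ)⁻¹ • a) = _
      rw [smul_inv_smul₀ ht])

theorem mem_coneFiber {J : TwoSidedIdeal (cone A)} {t : unitInterval} (ht : (t : ℝ) ≠ 0) {a : A} :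
    a ∈ coneFiber J ht ↔ ∃ x ∈ J, (x : C(unitInterval, A)) t = a :=
  TwoSidedIdeal.mem_mk' ..

end Cone

section UnitalCone

variable {D : Type*} [CStarAlgebra D]

theorem exists_mem_apply_eq_one_of_apply_ne_zero
    (hsimple : ∀ K : TwoSidedIdeal D, IsClosed (K : Set D) → K = ⊥ ∨ K = ⊤)
    {J : TwoSidedIdeal (cone D)} {f : cone D} (hf : f ∈ J) {t : unitInterval}
    (hft : (f : C(unitInterval, D)) t ≠ 0) : ∃ u ∈ J, (u : C(unitInterval, D)) t = 1 := by
  have ht : (t : ℝ) ≠ 0 := fun h => hft <| (Subtype.ext h : t = 0) ▸ f.2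
  have hne : coneFiber J ht ≠ ⊥ := fun h =>
    hft <| (TwoSidedIdeal.mem_bot _).1 <| h ▸ (mem_coneFiber ht).2 ⟨f, hf, rfl⟩
  exact (mem_coneFiber ht).1 <| TwoSidedIdeal.eq_top_of_ne_bot hsimple hne ▸ TwoSidedIdeal.mem_top D

variable (D) in
noncomputable def coneOfScalar : C(unitInterval, ℝ)₀ →⋆ₙₐ[ℝ] cone D where
  toFun β := ⟨⟨fun t => β t • (1 : D), by fun_prop⟩, show β 0 • (1 : D) = 0 by simp⟩
  map_smul' c β := by ext t; simp [smul_smul]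
  map_zero' := by ext t; simp
  map_add' β γ := by ext t; simp [add_smul]
  map_mul' β γ := by ext t; simp [smul_smul, mul_comm]
  map_star' β := by ext t; simp

theorem continuous_coneOfScalar : Continuous (coneOfScalar D) :=
  continuous_induced_rng.2 <| (ContinuousMap.continuous_postcomp
    ⟨fun r : ℝ => r • (1 : D), by fun_prop⟩).comp
      ContinuousMapZero.isEmbedding_toContinuousMap.continuous

theorem injective_comp_coneOfScalar {C : Type*} [CStarAlgebra C] (ψ : cone D →⋆ₙₐ[ℂ] C)
    (hψ : spectrum ℝ (ψ (coneElem 1)) = unitInterval) :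
    Function.Injective (ψ ∘ coneOfScalar D) :=
  ContinuousMapZero.injective_of_quasispectrum_id_eq ((ψ.restrictScalars ℝ).comp (coneOfScalar D))
    ((map_continuous ψ).comp continuous_coneOfScalar) <| by
      rw [quasispectrum_eq_spectrum_union_zero]
      show spectrum ℝ (ψ (coneElem 1)) ∪ {0} = unitInterval
      rw [hψ, Set.union_eq_left.2 (Set.singleton_subset_iff.2 unitInterval.zero_mem)]

theorem coneOfScalar_mem_of_tsupport_subset {J : TwoSidedIdeal (cone D)} {u : cone D} (hu : u ∈ J)
    {β : C(unitInterval, ℝ)₀} (hβ : tsupport β ⊆ {t | IsUnit ((u : C(unitInterval, D)) t)}) :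
    coneOfScalar D β ∈ J := by
  have hm : Continuous fun t => β t • Ring.inverse ((u : C(unitInterval, D)) t) := by
    refine continuous_of_tsupport fun t ht => ?_
    obtain ⟨v, hv⟩ := hβ (tsupport_smul_subset_left _ _ ht)
    exact β.continuous.continuousAt.smul <|
      (hv ▸ NormedRing.inverse_continuousAt v).comp (u : C(unitInterval, D)).continuous.continuousAt
  let m : cone D := ⟨⟨_, hm⟩, show β 0 • _ = (0 : D) by rw [map_zero, zero_smul]⟩
  have hβm : coneOfScalar D β = m * u := by
    ext t
    show β t • (1 : D) =
      β t • Ring.inverse ((u : C(unitInterval, D)) t) * (u : C(unitInterval, D)) t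
    by_cases hut : IsUnit ((u : C(unitInterval, D)) t)
    · rw [smul_mul_assoc, Ring.inverse_mul_cancel _ hut]
    · rw [image_eq_zero_of_notMem_tsupport fun h => hut (hβ h), zero_smul, zero_smul, zero_mul]
  exact hβm ▸ J.mul_mem_left _ _ hu

end UnitalCone

theorem cone_hom_injective_of_full_spectrum_general (D B C : Type*)
    [CStarAlgebra D] [CStarAlgebra B] [CStarAlgebra C]
    (hsimple : ∀ K : TwoSidedIdeal D, IsClosed (K : Set D) → K = ⊥ ∨ K = ⊤)
    (φ : D → B)
    (Φ : cone D →⋆ₙₐ[ℂ] B) (hΦ : ∀ d : D, Φ (coneElem d) = φ d)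
    (π : B →⋆ₐ[ℂ] C)
    (hspec : spectrum ℝ (π (φ 1)) = Set.Icc 0 1) :
    Function.Injective (fun x : cone D => π (Φ x)) := by
  let ψ : cone D →⋆ₙₐ[ℂ] C := (π : B →⋆ₙₐ[ℂ] C).comp Φ
  have hψ : Function.Injective (ψ ∘ coneOfScalar D) :=
    injective_comp_coneOfScalar ψ <| by
      show spectrum ℝ (π (Φ (coneElem 1))) = _
      rw [hΦ, hspec]
  show Function.Injective ψ
  rw [injective_iff_map_eq_zero]
  intro f hf
  by_contra hf0
  obtain ⟨t, ht⟩ : ∃ t, (f : C(unitInterval, D)) t ≠ 0 := by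
    contrapose! hf0; ext t; exact hf0 t
  have : Nontrivial D := ⟨⟨_, _, ht⟩⟩
  obtain ⟨u, hu, hut⟩ :=
    exists_mem_apply_eq_one_of_apply_ne_zero hsimple ((TwoSidedIdeal.mem_ker ψ).2 hf) ht
  obtain ⟨β, hβt, hβU⟩ := exists_tsupport_subset_apply_eq_one
    (Units.isOpen.preimage (u : C(unitInterval, D)).continuous) (by simp [hut] : t ∈ _)
    (by simp [show (u : C(unitInterval, D)) 0 = 0 from u.2])
  have hβ : β = 0 := hψ <| by
    simpa using (TwoSidedIdeal.mem_ker ψ).1 (coneOfScalar_mem_of_tsupport_subset hu hβU)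
  exact one_ne_zero (hβt.symm.trans (by rw [hβ]; rfl))

/-- Let `D` be a simple unital C*-algebra, `φ : D → B` a c.p.c. order zero map with
associated *-homomorphism `Φ : C₀(0,1] ⊗ D → B`, and `π : B → C` a surjective
*-homomorphism.  If `π(φ(1))` has spectrum `[0,1]`, then `π ∘ Φ` is injective. -/
theorem cone_hom_injective_of_full_spectrum (D B C : Type*)
    [CStarAlgebra D] [CStarAlgebra B] [CStarAlgebra C]
    [PartialOrder D] [StarOrderedRing D] [PartialOrder B] [StarOrderedRing B]
    (hsimple : ∀ K : TwoSidedIdeal D, IsClosed (K : Set D) → K = ⊥ ∨ K = ⊤)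
    (φ : D → B) (hφ : IsCPCOrderZero φ)
    (Φ : cone D →⋆ₙₐ[ℂ] B) (hΦ : ∀ d : D, Φ (coneElem d) = φ d)
    (π : B →⋆ₐ[ℂ] C) (hπ : Function.Surjective π)
    (hspec : spectrum ℝ (π (φ 1)) = Set.Icc 0 1) :
    Function.Injective (fun x : cone D => π (Φ x)) :=
  cone_hom_injective_of_full_spectrum_general D B C hsimple φ Φ hΦ π hspec
end

section
/- Let ω be a free ultrafilter on ℕ and (B_i) a sequence of simple purely infinite C*-algebras. Then for every nonzero positive element b in the ultraproduct ∏_{i→ω} B_i with ‖b‖ = 1 (in the unital case), there exists c in the ultraproduct with c* b c = 1. (Special case: the ultraproduct of unital simple purely infinite C*-algebras is simple and purely infinite.) -/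
/-!
Fix `0 < ε < ‖a‖`. Pure infiniteness applied to the nonzero positive element `(a - ε)₊` gives
`d` with `d* (a - ε)₊ d = 1`, so `v = (a - ε)₊^(1/2) d` is an isometry. With
`s = (max a ε)^(-1/2)` one has `(a - ε)₊^(1/2) s a s (a - ε)₊^(1/2) = (a - ε)₊`, hence `c = s v`
solves `c* a c = 1` with `‖c‖ ≤ ε^(-1/2)`, a bound independent of `a`. Taking `ε = 1/2` in every
coordinate where `‖b i‖ > 1/2`, an `ω`-large set, gives a bounded representative of the required
element of the ultraproduct.
-/

open Filter

section CStarAlgebra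

variable {A : Type*} [CStarAlgebra A]

lemma norm_eq_one_of_star_mul_self_eq_one [Nontrivial A] {x : A} (hx : star x * x = 1) :
    ‖x‖ = 1 := by
  have h := CStarRing.norm_star_mul_self (x := x)
  rw [hx, CStarRing.norm_one] at h
  nlinarith [norm_nonneg x]

lemma cfc_mul_mul (f g h : ℝ → ℝ) (a : A) (hf : ContinuousOn f (spectrum ℝ a))
    (hg : ContinuousOn g (spectrum ℝ a)) (hh : ContinuousOn h (spectrum ℝ a)) :
    cfc f a * cfc g a * cfc h a = cfc (fun t => f t * g t * h t) a := by
  rw [← cfc_mul f g a, ← cfc_mul (fun t => f t * g t) h a (hf.mul hg)]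

lemma Real.sqrt_max_sub_mul_conj_inv_sqrt_max {ε : ℝ} (hε : 0 < ε) (t : ℝ) :
    √(max (t - ε) 0) * ((√(max t ε))⁻¹ * t * (√(max t ε))⁻¹) * √(max (t - ε) 0) =
      max (t - ε) 0 := by
  rcases le_or_gt t ε with htε | htε
  · simp [max_eq_right (sub_nonpos.2 htε)]
  · have hsqrt : (√t)⁻¹ * t * (√t)⁻¹ = 1 := by
      have : √t ≠ 0 := (Real.sqrt_pos.2 (hε.trans htε)).ne'
      field_simp
      exact (Real.sq_sqrt (hε.trans htε).le).symm
    rw [max_eq_left htε.le, hsqrt, mul_one, Real.mul_self_sqrt (le_max_right _ _)]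

variable [PartialOrder A] [StarOrderedRing A]

lemma cfc_max_sub_ne_zero_of_lt_norm [Nontrivial A] {a : A} (ha : 0 ≤ a) {ε : ℝ}
    (hεa : ε < ‖a‖) : cfc (fun t : ℝ => max (t - ε) 0) a ≠ 0 := by
  intro h
  have := norm_apply_le_norm_cfc (fun t : ℝ => max (t - ε) 0) a
    (CStarAlgebra.norm_mem_spectrum_of_nonneg ha)
  rw [h, norm_zero, Real.norm_eq_abs, abs_le] at this
  linarith [le_max_left (‖a‖ - ε) 0]

lemma exists_star_mul_mul_eq_one_of_lt_norm
    (hpi : ∀ b : A, 0 ≤ b → b ≠ 0 → ∃ c : A, star c * b * c = 1)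
    {a : A} (ha : 0 ≤ a) {ε : ℝ} (hε : 0 < ε) (hεa : ε < ‖a‖) :
    ∃ c : A, star c * a * c = 1 ∧ ‖c‖ ≤ (√ε)⁻¹ := by
  have : Nontrivial A := nontrivial_of_ne a 0 (by rintro rfl; simp at hεa; linarith)
  set g := cfc (fun t : ℝ => max (t - ε) 0) a
  set e := cfc (fun t : ℝ => √(max (t - ε) 0)) a
  set s := cfc (fun t : ℝ => (√(max t ε))⁻¹) a
  obtain ⟨d, hd⟩ := hpi g (cfc_nonneg fun _ _ => le_max_right _ _)
    (cfc_max_sub_ne_zero_of_lt_norm ha hεa)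
  have he_star : star e = e := IsSelfAdjoint.cfc
  have hs_star : star s = s := IsSelfAdjoint.cfc
  have hee : e * e = g := by
    rw [← cfc_mul _ _ a]
    exact cfc_congr fun t _ => Real.mul_self_sqrt (le_max_right _ _)
  have hesase : e * (s * a * s) * e = g := by
    rw [show s * a * s = s * cfc (fun t : ℝ => t) a * s by rw [cfc_id' ℝ a],
      cfc_mul_mul _ _ _ a, cfc_mul_mul _ _ _ a]
    · exact cfc_congr fun t _ => Real.sqrt_max_sub_mul_conj_inv_sqrt_max hε t
    all_goals fun_prop (disch := intros; positivity)
  have hed : ‖e * d‖ = 1 := by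
    refine norm_eq_one_of_star_mul_self_eq_one ?_
    rw [star_mul, he_star, ← hd, ← hee]
    noncomm_ring
  have hs : ‖s‖ ≤ (√ε)⁻¹ := by
    refine norm_cfc_le (by positivity) fun t _ => ?_
    rw [Real.norm_eq_abs, abs_of_nonneg (by positivity)]
    exact inv_anti₀ (Real.sqrt_pos.2 hε) (Real.sqrt_le_sqrt (le_max_right _ _))
  refine ⟨s * (e * d), ?_, ?_⟩
  · calc star (s * (e * d)) * a * (s * (e * d)) = star d * (e * (s * a * s) * e) * d := by
          rw [star_mul, star_mul, he_star, hs_star]; noncomm_ring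
      _ = 1 := by rw [hesase, hd]
  · calc ‖s * (e * d)‖ ≤ ‖s‖ * ‖e * d‖ := norm_mul_le _ _
      _ ≤ (√ε)⁻¹ := by rwa [hed, mul_one]

end CStarAlgebra

theorem ultraproduct_purely_infinite_general (B : ℕ → Type*) [∀ i, CStarAlgebra (B i)]
    [∀ i, PartialOrder (B i)] [∀ i, StarOrderedRing (B i)]
    (ω : Ultrafilter ℕ)
    (hpi : ∀ i, ∀ b : B i, 0 ≤ b → b ≠ 0 → ∃ c : B i, star c * b * c = 1)
    (b : ∀ i, B i) (hbpos : ∀ i, 0 ≤ b i)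
    (hbnorm : Tendsto (fun i => ‖b i‖) (ω : Filter ℕ) (nhds 1)) :
    ∃ c : ∀ i, B i, (∃ C : ℝ, ∀ i, ‖c i‖ ≤ C) ∧
      Tendsto (fun i => ‖star (c i) * b i * c i - 1‖) (ω : Filter ℕ) (nhds 0) := by
  have hc (i : ℕ) : ∃ c : B i, ‖c‖ ≤ (√(1 / 2))⁻¹ ∧
      (1 / 2 < ‖b i‖ → star c * b i * c = 1) := by
    by_cases hbi : 1 / 2 < ‖b i‖
    · obtain ⟨c, hconj, hnorm⟩ :=
        exists_star_mul_mul_eq_one_of_lt_norm (hpi i) (hbpos i) (by norm_num) hbi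
      exact ⟨c, hnorm, fun _ => hconj⟩
    · exact ⟨0, by rw [norm_zero]; positivity, fun h => absurd h hbi⟩
  choose c hc_norm hc_conj using hc
  refine ⟨c, ⟨_, hc_norm⟩, tendsto_const_nhds.congr' ?_⟩
  filter_upwards [hbnorm.eventually (eventually_gt_nhds (by norm_num : (1 / 2 : ℝ) < 1))]
    with i hi
  rw [hc_conj i hi, sub_self, norm_zero]

open Filter in
/-- Ultraproducts of unital simple purely infinite C*-algebras are simple and purely
infinite: if each `B i` is unital, not `ℂ`, and for every nonzero positive `b` there is
`c` with `c* b c = 1`, then for every positive element of the ultraproduct of norm one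
(represented by a positive bounded sequence `b` with `‖b i‖ → 1` along `ω`) there is an
element `c` of the ultraproduct with `c* b c = 1`. -/
theorem ultraproduct_purely_infinite (B : ℕ → Type*) [∀ i, CStarAlgebra (B i)]
    [∀ i, PartialOrder (B i)] [∀ i, StarOrderedRing (B i)]
    (ω : Ultrafilter ℕ) (hfree : Filter.cofinite ≤ (ω : Filter ℕ))
    (hnontrivial : ∀ i, ∃ b : B i, ∀ z : ℂ, b ≠ z • (1 : B i))
    (hpi : ∀ i, ∀ b : B i, 0 ≤ b → b ≠ 0 → ∃ c : B i, star c * b * c = 1)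
    (b : ∀ i, B i) (hbpos : ∀ i, 0 ≤ b i)
    (hbnorm : Tendsto (fun i => ‖b i‖) (ω : Filter ℕ) (nhds 1)) :
    ∃ c : ∀ i, B i, (∃ C : ℝ, ∀ i, ‖c i‖ ≤ C) ∧
      Tendsto (fun i => ‖star (c i) * b i * c i - 1‖) (ω : Filter ℕ) (nhds 0) :=
  ultraproduct_purely_infinite_general B ω hpi b hbpos hbnorm
end
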